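/- Let C_v > 0, κ > 0, set μ = κ²/2, A₁ = C_v/κ², A₂ = 2C_v/κ², and let Φ denote the standard normal CDF. Define g(v) = e^{v²/2}(A₁ e^{−v²} + A₂(Φ(v) − 1)) for v ≥ 0 and g(v) = e^{v²/2}(−A₁ e^{−v²} + A₂ Φ(v)) for v < 0, and y(v) = ∫₀^v g(u) du. Then g is continuous at 0 (which holds precisely because A₂ = 2A₁), y is C², and for all v ∈ ℝ the equation ½κ² y''(v) − μ v y'(v) + C_v|v| e^{−v²/2} = C_v/√(2π) holds. Hence (y(V_t), κ g(V_t), C_v/√(2π)) is a Markovian solution of the ergodic BSDE with driver F(v) = C_v |v| e^{−v²/2} and ergodic cost λ = C_v/√(2π), where dV_t = −μ V_t dt + κ dW_t. -/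

import Mathlib

/-!
On each half-line `g` has the form `e^{v²/2} (a e^{-v²} + ψ v)` with `ψ' = A₂ Φ'`, which gives the
linear ODE `g' = v g - 2 A₁ |v| e^{-v²/2} + A₂/√(2π)` on both sides. The two pieces agree at `0`
exactly because `A₂ = 2 A₁`, and then so do their derivatives, so `g` is differentiable everywhere
and `y' = g`. With `μ = κ²/2` the drift terms `v g` cancel, and `κ² A₁ = C_v` makes the `|v|` terms
cancel against the driver, leaving `C_v/√(2π)`.
-/

open MeasureTheory Real Set

theorem hasDerivAt_integral_Iic {E : Type*} [NormedAddCommGroup E] [NormedSpace ℝ E]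
    [CompleteSpace E] {f : ℝ → E} (hf : Continuous f) (hint : ∀ b, IntegrableOn f (Iic b))
    (x : ℝ) : HasDerivAt (fun x => ∫ u in Iic x, f u) (f x) x := by
  have hsplit : (fun x => ∫ u in Iic x, f u) =
      fun x => (∫ u in Iic 0, f u) + ∫ u in (0 : ℝ)..x, f u := by
    funext x
    rw [← intervalIntegral.integral_Iic_sub_Iic (hint 0) (hint x), add_sub_cancel]
  rw [hsplit]
  exact ((hf.integral_hasStrictDerivAt 0 x).hasDerivAt).const_add _

theorem hasDerivAt_ite_le {p m p' m' : ℝ → ℝ} {a : ℝ} (hp : ∀ x, HasDerivAt p (p' x) x)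
    (hm : ∀ x, HasDerivAt m (m' x) x) (hpm : p a = m a) (hpm' : p' a = m' a) (x : ℝ) :
    HasDerivAt (fun v => if a ≤ v then p v else m v) (if a ≤ x then p' x else m' x) x := by
  rcases lt_trichotomy x a with hx | rfl | hx
  · rw [if_neg hx.not_ge]
    refine (hm x).congr_of_eventuallyEq ?_
    filter_upwards [Iio_mem_nhds hx] with v hv
    rw [if_neg (not_le.mpr hv)]
  · rw [if_pos le_rfl]
    have hright : HasDerivWithinAt (fun v => if x ≤ v then p v else m v) (p' x) (Ici x) x :=
      (hp x).hasDerivWithinAt.congr (fun v hv => if_pos hv) (if_pos le_rfl)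
    have hleft : HasDerivWithinAt (fun v => if x ≤ v then p v else m v) (p' x) (Iic x) x := by
      rw [hpm']
      refine (hm x).hasDerivWithinAt.congr (fun v hv => ?_) (by rw [if_pos le_rfl, hpm])
      rcases (mem_Iic.mp hv).lt_or_eq with hv | rfl
      · exact if_neg hv.not_ge
      · rw [if_pos le_rfl, hpm]
    simpa [Iic_union_Ici] using hleft.union hright
  · rw [if_pos hx.le]
    refine (hp x).congr_of_eventuallyEq ?_
    filter_upwards [Ioi_mem_nhds hx] with v hv
    rw [if_pos hv.le]

noncomputable def stdGaussianCDF (x : ℝ) : ℝ :=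
  (√(2 * π))⁻¹ * ∫ u in Iic x, exp (-u ^ 2 / 2)

theorem hasDerivAt_stdGaussianCDF (x : ℝ) :
    HasDerivAt stdGaussianCDF ((√(2 * π))⁻¹ * exp (-x ^ 2 / 2)) x := by
  have hint : Integrable fun u : ℝ => exp (-u ^ 2 / 2) := by
    simpa [neg_div, div_eq_inv_mul] using integrable_exp_neg_mul_sq (b := 1 / 2) (by norm_num)
  exact (hasDerivAt_integral_Iic (by fun_prop) (fun _ => hint.integrableOn) x).const_mul _

theorem hasDerivAt_exp_half_sq_mul {ψ : ℝ → ℝ} {a b v : ℝ}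
    (hψ : HasDerivAt ψ (b * exp (-v ^ 2 / 2)) v) :
    HasDerivAt (fun v => exp (v ^ 2 / 2) * (a * exp (-v ^ 2) + ψ v))
      (v * (exp (v ^ 2 / 2) * (a * exp (-v ^ 2) + ψ v)) - 2 * a * v * exp (-v ^ 2 / 2) + b) v := by
  have hsq : HasDerivAt (fun v : ℝ => v ^ 2 / 2) v v := by
    simpa using (hasDerivAt_pow 2 v).div_const 2
  have hnsq : HasDerivAt (fun v : ℝ => -v ^ 2) (-(2 * v)) v := by
    simpa using (hasDerivAt_pow 2 v).fun_neg
  have h := hsq.exp.mul ((hnsq.exp.const_mul a).add hψ)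
  refine h.congr_deriv ?_
  have e1 : exp (v ^ 2 / 2) * exp (-v ^ 2) = exp (-v ^ 2 / 2) := by
    rw [← exp_add]; ring_nf
  have e2 : exp (v ^ 2 / 2) * exp (-v ^ 2 / 2) = 1 := by
    rw [← exp_add]; ring_nf; exact exp_zero
  simp only [Pi.add_apply]
  linear_combination b * e2 - 2 * a * v * e1

theorem stmt7_general (κ Cv : ℝ) (hκ : 0 < κ) :
    let μc := κ^2/2
    let A₁ := Cv/κ^2
    let A₂ := 2*Cv/κ^2
    let Φ : ℝ → ℝ := fun x =>
      (Real.sqrt (2*Real.pi))⁻¹ * ∫ u in Set.Iic x, Real.exp (-u^2/2)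
    let g : ℝ → ℝ := fun v =>
      if 0 ≤ v then Real.exp (v^2/2) * (A₁ * Real.exp (-v^2) + A₂ * (Φ v - 1))
      else Real.exp (v^2/2) * (-A₁ * Real.exp (-v^2) + A₂ * Φ v)
    let y : ℝ → ℝ := fun v => ∫ u in (0:ℝ)..v, g u
    ContinuousAt g 0 ∧
    (∀ v, HasDerivAt y (g v) v) ∧
    (∀ v, (1/2) * κ^2 * deriv g v - μc * v * g v + Cv * |v| * Real.exp (-v^2/2)
        = Cv / Real.sqrt (2*Real.pi)) := by
  intro μc A₁ A₂ Φ g y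
  have hΦ (v : ℝ) : HasDerivAt Φ ((√(2 * π))⁻¹ * exp (-v ^ 2 / 2)) v := hasDerivAt_stdGaussianCDF v
  have hg' (v : ℝ) :
      HasDerivAt g (v * g v - 2 * A₁ * |v| * exp (-v ^ 2 / 2) + A₂ * (√(2 * π))⁻¹) v := by
    have hpos (x : ℝ) := hasDerivAt_exp_half_sq_mul (a := A₁) (b := A₂ * (√(2 * π))⁻¹)
      (((hΦ x).sub_const 1).const_mul A₂ |>.congr_deriv (mul_assoc _ _ _).symm)
    have hneg (x : ℝ) := hasDerivAt_exp_half_sq_mul (a := -A₁) (b := A₂ * (√(2 * π))⁻¹)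
      ((hΦ x).const_mul A₂ |>.congr_deriv (mul_assoc _ _ _).symm)
    have hA : A₂ = 2 * A₁ := by simp only [A₁, A₂]; ring
    have hglue : exp (0 ^ 2 / 2) * (A₁ * exp (-0 ^ 2) + A₂ * (Φ 0 - 1))
        = exp (0 ^ 2 / 2) * (-A₁ * exp (-0 ^ 2) + A₂ * Φ 0) := by
      simp only [hA, zero_pow two_ne_zero, zero_div, neg_zero, exp_zero]; ring
    refine (hasDerivAt_ite_le hpos hneg hglue (by rw [hglue]; ring) v).congr_deriv ?_
    rcases le_or_gt 0 v with hv | hv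
    · simp only [g, if_pos hv, abs_of_nonneg hv]
    · simp only [g, if_neg hv.not_ge, abs_of_neg hv]; ring
  refine ⟨(hg' 0).continuousAt, fun v => ?_, fun v => ?_⟩
  · have hg : Continuous g := continuous_iff_continuousAt.mpr fun v => (hg' v).continuousAt
    exact (hg.integral_hasStrictDerivAt 0 v).hasDerivAt
  · rw [(hg' v).deriv]
    simp only [μc, A₁, A₂]
    field_simp
    ring

/-- explicit Markovian solution of the ergodic BSDE with driver
`F(v) = C_v |v| e^{-v²/2}`, mean reversion `μ = κ²/2`, and ergodic cost
`λ = C_v/√(2π)`. -/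
theorem stmt7 (κ Cv : ℝ) (hκ : 0 < κ) (hCv : 0 < Cv) :
    let μc := κ^2/2
    let A₁ := Cv/κ^2
    let A₂ := 2*Cv/κ^2
    let Φ : ℝ → ℝ := fun x =>
      (Real.sqrt (2*Real.pi))⁻¹ * ∫ u in Set.Iic x, Real.exp (-u^2/2)
    let g : ℝ → ℝ := fun v =>
      if 0 ≤ v then Real.exp (v^2/2) * (A₁ * Real.exp (-v^2) + A₂ * (Φ v - 1))
      else Real.exp (v^2/2) * (-A₁ * Real.exp (-v^2) + A₂ * Φ v)
    let y : ℝ → ℝ := fun v => ∫ u in (0:ℝ)..v, g u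
    ContinuousAt g 0 ∧
    (∀ v, HasDerivAt y (g v) v) ∧
    (∀ v, (1/2) * κ^2 * deriv g v - μc * v * g v + Cv * |v| * Real.exp (-v^2/2)
        = Cv / Real.sqrt (2*Real.pi)) :=
  stmt7_general κ Cv hκ
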